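/- arXiv:2602.03946 — 3 statements merged into one kernel-verified Lean document; each statement's English description precedes it below -/
import Mathlib

section
/- Let r solve the (g,1)-ODE and suppose W(−∞) := lim_{x→−∞} W(x) exists and is strictly negative. Then lim_{x→−∞} r(x) = kπ is impossible for any k ∈ ℤ; moreover, if additionally r is point symmetric with respect to (0, r(0)), then r is bounded on ℝ. -/
open Real Filter Topology

noncomputable def aa (g x : ℝ) : ℝ := (2 / g) * Real.arctan (Real.exp x)

noncomputable def h1 (g x : ℝ) : ℝ :=
  (g - 1) * Real.cos (2 * aa g x) + Real.cos (2 * (g - 1) * aa g x)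

noncomputable def h2 (g x : ℝ) : ℝ :=
  -(g - 1) * Real.sin (2 * aa g x) + Real.sin (2 * (g - 1) * aa g x)

/-- The (g,m)-ODE in the variable x. -/
def IsGMSol (g m : ℝ) (r : ℝ → ℝ) : Prop :=
  ∀ x : ℝ, deriv (deriv r) x =
    (m - 1) * Real.tanh x * deriv r x +
      (m / (2 * g)) * ((g - 1) * Real.sin (2 * r x - 2 * aa g x) +
        Real.sin (2 * r x + 2 * (g - 1) * aa g x))

/-- The Lyapunov function W associated to a solution r. -/
noncomputable def W (g : ℝ) (r : ℝ → ℝ) (x : ℝ) : ℝ :=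
  (1 / 2) * (deriv r x) ^ 2 - (1 / (2 * g)) * h1 g x * (Real.sin (r x)) ^ 2
    - (1 / (2 * g)) * h2 g x * (Real.sin (r x - 3 * Real.pi / 4)) ^ 2

lemma aa_tendsto (g : ℝ) : Tendsto (aa g) atBot (𝓝 0) := by
  have h1 : Tendsto (fun x : ℝ => Real.arctan (Real.exp x)) atBot (𝓝 0) := by
    have := (Real.continuous_arctan.tendsto 0).comp Real.tendsto_exp_atBot
    simpa [Function.comp_def] using this
  have := h1.const_mul (2 / g)
  exact (by simpa using this : Tendsto (fun x => 2 / g * Real.arctan (Real.exp x)) atBot (𝓝 0))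

lemma h2_tendsto (g : ℝ) : Tendsto (h2 g) atBot (𝓝 0) := by
  have hF : Continuous (fun y : ℝ => -(g - 1) * Real.sin (2 * y) + Real.sin (2 * (g - 1) * y)) := by
    continuity
  have := (hF.tendsto 0).comp (aa_tendsto g)
  have heq : h2 g = (fun y : ℝ => -(g - 1) * Real.sin (2 * y) + Real.sin (2 * (g - 1) * y)) ∘ aa g := rfl
  rw [heq]
  simpa using this

lemma h1_bound (g : ℝ) (hg2 : 2 ≤ g) (x : ℝ) : |h1 g x| ≤ g := by
  have h := abs_add_le ((g - 1) * Real.cos (2 * aa g x)) (Real.cos (2 * (g - 1) * aa g x))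
  have c1 : |Real.cos (2 * aa g x)| ≤ 1 := Real.abs_cos_le_one _
  have c2 : |Real.cos (2 * (g - 1) * aa g x)| ≤ 1 := Real.abs_cos_le_one _
  have hm : |(g - 1) * Real.cos (2 * aa g x)| = (g - 1) * |Real.cos (2 * aa g x)| := by
    rw [abs_mul, abs_of_nonneg (by linarith)]
  unfold h1
  nlinarith [abs_nonneg (Real.cos (2 * aa g x))]

theorem stmt14 (g : ℝ) (hg : g ∈ ({2, 3, 4, 6} : Set ℝ)) (r : ℝ → ℝ)
    (hr : ContDiff ℝ 2 r) (hODE : IsGMSol g 1 r) (w : ℝ)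
    (hw : Filter.Tendsto (W g r) Filter.atBot (nhds w)) (hwneg : w < 0) :
    (∀ k : ℤ, ¬ Filter.Tendsto r Filter.atBot (nhds ((k : ℝ) * Real.pi))) ∧
    ((∀ x : ℝ, r (-x) = 2 * r 0 - r x) → ∃ C : ℝ, ∀ x : ℝ, |r x| ≤ C) := by
  have hg2 : (2:ℝ) ≤ g := by
    simp only [Set.mem_insert_iff, Set.mem_singleton_iff] at hg
    rcases hg with h | h | h | h <;> rw [h] <;> norm_num
  have hg0 : (0:ℝ) < g := by linarith
  constructor
  · -- Part 1
    intro k hk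
    -- sin (r x) → 0
    have s1 : Tendsto (fun x => Real.sin (r x)) atBot (𝓝 0) := by
      have := (Real.continuous_sin.tendsto ((k:ℝ) * Real.pi)).comp hk
      simpa [Function.comp_def, Real.sin_int_mul_pi] using this
    have s2 : Tendsto (fun x => (Real.sin (r x))^2) atBot (𝓝 0) := by
      have := s1.pow 2
      simpa using this
    -- define the lower bound function f
    set f : ℝ → ℝ := fun x => -((1 / (2 * g)) * (h1 g x * (Real.sin (r x))^2
        + h2 g x * (Real.sin (r x - 3 * Real.pi / 4))^2)) with hf
    have hfW : ∀ x, f x ≤ W g r x := by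
      intro x
      have := sq_nonneg (deriv r x)
      simp only [hf, W]
      nlinarith
    have hftend : Tendsto f atBot (𝓝 0) := by
      apply squeeze_zero_norm (a := fun x => (1 / (2 * g)) * (g * (Real.sin (r x))^2 + |h2 g x|))
      · intro x
        have hb : |h1 g x * (Real.sin (r x))^2 + h2 g x * (Real.sin (r x - 3 * Real.pi / 4))^2|
            ≤ g * (Real.sin (r x))^2 + |h2 g x| := by
          have t2 : (Real.sin (r x - 3 * Real.pi / 4))^2 ≤ 1 := Real.sin_sq_le_one _
          have hA := abs_add_le (h1 g x * (Real.sin (r x))^2)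
            (h2 g x * (Real.sin (r x - 3 * Real.pi / 4))^2)
          rw [abs_mul, abs_mul, abs_of_nonneg (sq_nonneg (Real.sin (r x))),
            abs_of_nonneg (sq_nonneg (Real.sin (r x - 3 * Real.pi / 4)))] at hA
          have h1b := h1_bound g hg2 x
          nlinarith [sq_nonneg (Real.sin (r x)), abs_nonneg (h2 g x), abs_nonneg (h1 g x)]
        have hc : (0:ℝ) ≤ 1 / (2 * g) := by positivity
        calc ‖f x‖ = (1 / (2 * g)) * |h1 g x * (Real.sin (r x))^2
              + h2 g x * (Real.sin (r x - 3 * Real.pi / 4))^2| := by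
              rw [hf]; rw [Real.norm_eq_abs, abs_neg, abs_mul, abs_of_nonneg hc]
          _ ≤ (1 / (2 * g)) * (g * (Real.sin (r x))^2 + |h2 g x|) :=
              mul_le_mul_of_nonneg_left hb hc
      · have t1 := s2.const_mul g
        have t2 := (h2_tendsto g).abs
        have := (t1.add (by simpa using t2)).const_mul (1 / (2 * g))
        simpa using this
    have : (0:ℝ) ≤ w := le_of_tendsto_of_tendsto' hftend hw hfW
    linarith
  · -- Part 2
    intro hsym
    -- eventually W < w/2 and |h2| < g * (-w)
    have hWev : ∀ᶠ x in atBot, W g r x < w / 2 :=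
      hw.eventually_lt_const (by linarith)
    have hh2ev : ∀ᶠ x in atBot, |h2 g x| < g * (-w) := by
      have := (h2_tendsto g).abs
      exact (by simpa using this : Tendsto (fun x => |h2 g x|) atBot (𝓝 0)).eventually_lt_const
        (by nlinarith)
    obtain ⟨X0, hX0⟩ := eventually_atBot.mp (hWev.and hh2ev)
    set X := min X0 0 with hX
    have hXle : X ≤ 0 := min_le_right _ _
    have hXcond : ∀ x ≤ X, W g r x < w / 2 ∧ |h2 g x| < g * (-w) := fun x hx =>
      hX0 x (le_trans hx (min_le_left _ _))
    -- sin (r x) ≠ 0 for x ≤ X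
    have hsin : ∀ x ≤ X, Real.sin (r x) ≠ 0 := by
      intro x hx hs0
      obtain ⟨hW1, hW2⟩ := hXcond x hx
      set s := (Real.sin (r x - 3 * Real.pi / 4))^2 with hsdef
      have hs0' : 0 ≤ s := sq_nonneg _
      have hs1 : s ≤ 1 := Real.sin_sq_le_one _
      have hWx : (1/2) * (deriv r x)^2 - (1 / (2 * g)) * (h2 g x * s) < w / 2 := by
        have : W g r x = (1/2) * (deriv r x)^2 - (1 / (2 * g)) * (h2 g x * s) := by
          simp [W, hs0, hsdef]; ring
        linarith [this ▸ hW1]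
      have ht : h2 g x * s ≤ |h2 g x| := by
        calc h2 g x * s ≤ |h2 g x| * s := mul_le_mul_of_nonneg_right (le_abs_self _) hs0'
          _ ≤ |h2 g x| * 1 := mul_le_mul_of_nonneg_left hs1 (abs_nonneg _)
          _ = |h2 g x| := mul_one _
      have ht2 : h2 g x * s < g * (-w) := lt_of_le_of_lt ht hW2
      have hc : (0:ℝ) < 1 / (2 * g) := by positivity
      have := mul_lt_mul_of_pos_left ht2 hc
      have heq : (1 / (2 * g)) * (g * (-w)) = -w / 2 := by field_simp
      nlinarith [sq_nonneg (deriv r x)]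
    -- r trapped in (kπ, (k+1)π) on (-∞, X]
    have hcont : Continuous r := hr.continuous
    set k : ℤ := ⌊r X / Real.pi⌋ with hk
    have hpi := Real.pi_pos
    have hfl1 : (k:ℝ) * Real.pi ≤ r X := by
      have := Int.floor_le (r X / Real.pi)
      calc (k:ℝ) * Real.pi ≤ (r X / Real.pi) * Real.pi := by
            apply mul_le_mul_of_nonneg_right this hpi.le
        _ = r X := by field_simp
    have hfl2 : r X < ((k:ℝ) + 1) * Real.pi := by
      have := Int.lt_floor_add_one (r X / Real.pi)
      calc r X = (r X / Real.pi) * Real.pi := by field_simp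
        _ < ((k:ℝ) + 1) * Real.pi := by apply mul_lt_mul_of_pos_right this hpi
    have hfl1' : (k:ℝ) * Real.pi < r X := by
      rcases lt_or_eq_of_le hfl1 with h | h
      · exact h
      · exfalso; exact hsin X le_rfl (by rw [← h, Real.sin_int_mul_pi])
    have htrap : ∀ x ≤ X, (k:ℝ) * Real.pi < r x ∧ r x < ((k:ℝ) + 1) * Real.pi := by
      intro x hx
      constructor
      · by_contra h
        push_neg at h
        have hmem : (k:ℝ) * Real.pi ∈ Set.Icc (r x) (r X) := ⟨h, hfl1⟩
        obtain ⟨y, hy, hry⟩ := intermediate_value_Icc hx hcont.continuousOn hmem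
        exact hsin y (le_trans hy.2 le_rfl) (by rw [hry, Real.sin_int_mul_pi])
      · by_contra h
        push_neg at h
        have hmem : ((k:ℝ) + 1) * Real.pi ∈ Set.Icc (r X) (r x) := ⟨hfl2.le, h⟩
        obtain ⟨y, hy, hry⟩ := intermediate_value_Icc' hx hcont.continuousOn hmem
        have : Real.sin (((k:ℝ) + 1) * Real.pi) = 0 := by
          have := Real.sin_int_mul_pi (k + 1)
          push_cast at this
          exact this
        exact hsin y hy.2 (by rw [hry, this])
    set C1 : ℝ := |(k:ℝ) * Real.pi| + |((k:ℝ) + 1) * Real.pi| with hC1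
    have hbd1 : ∀ x ≤ X, |r x| ≤ C1 := by
      intro x hx
      obtain ⟨ha, hb⟩ := htrap x hx
      rw [abs_le]
      constructor
      · have := neg_abs_le ((k:ℝ) * Real.pi)
        have := abs_nonneg (((k:ℝ) + 1) * Real.pi)
        simp only [hC1]; linarith
      · have := le_abs_self (((k:ℝ) + 1) * Real.pi)
        have := abs_nonneg ((k:ℝ) * Real.pi)
        simp only [hC1]; linarith
    obtain ⟨C2, hC2⟩ := (isCompact_Icc (a := X) (b := (0:ℝ))).exists_bound_of_continuousOn
      hcont.continuousOn
    have hC2' : ∀ x, X ≤ x → x ≤ 0 → |r x| ≤ C2 := fun x h1 h2 => by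
      simpa using hC2 x ⟨h1, h2⟩
    refine ⟨2 * |r 0| + (C1 + C2), fun x => ?_⟩
    have hC1nn : 0 ≤ C1 := by positivity
    have hC2nn : 0 ≤ C2 := le_trans (abs_nonneg _) (hC2' X le_rfl hXle)
    have hr0 : 0 ≤ |r 0| := abs_nonneg _
    have key : ∀ y ≤ (0:ℝ), |r y| ≤ C1 + C2 := by
      intro y hy
      rcases le_or_gt y X with h | h
      · linarith [hbd1 y h]
      · linarith [hC2' y h.le hy]
    rcases le_or_gt x 0 with hx | hx
    · linarith [key x hx]
    · have hsx := hsym x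
      have : r x = 2 * r 0 - r (-x) := by linarith [hsx]
      rw [this]
      have := key (-x) (by linarith)
      calc |2 * r 0 - r (-x)| ≤ |2 * r 0| + |r (-x)| := abs_sub _ _
        _ ≤ 2 * |r 0| + (C1 + C2) := by rw [abs_mul]; simp; linarith
end

section
/- For g ∈ {2,3,4,6} and m = 1, the derivative of the Lyapunov function satisfies the uniform bound |W'(x)| ≤ 4(g−1)/(g²·cosh x) for all x ∈ ℝ, and consequently |W(0) − lim_{x→−∞} W(x)| ≤ 2π(g−1)/g². -/
open Real Filter Topology

/- auxiliary definitions -/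

noncomputable def h1d (g x : ℝ) : ℝ :=
  -(2 * (g - 1)) * (1 / (g * Real.cosh x)) *
    (Real.sin (2 * aa g x) + Real.sin (2 * (g - 1) * aa g x))

noncomputable def h2d (g x : ℝ) : ℝ :=
  (2 * (g - 1)) * (1 / (g * Real.cosh x)) *
    (Real.cos (2 * (g - 1) * aa g x) - Real.cos (2 * aa g x))

noncomputable def Wd (g : ℝ) (r : ℝ → ℝ) (x : ℝ) : ℝ :=
  -(1 / (2 * g)) * (h1d g x * (Real.sin (r x)) ^ 2
    + h2d g x * (Real.sin (r x - 3 * Real.pi / 4)) ^ 2)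

lemma hasDerivAt_aa (g : ℝ) (hg : g ≠ 0) (x : ℝ) :
    HasDerivAt (aa g) (1 / (g * Real.cosh x)) x := by
  have h1 : HasDerivAt (fun y : ℝ => Real.arctan (Real.exp y))
      (1 / (1 + Real.exp x ^ 2) * Real.exp x) x :=
    (Real.hasDerivAt_arctan (Real.exp x)).comp x (Real.hasDerivAt_exp x)
  have h2 := h1.const_mul (2 / g)
  have heq : 2 / g * (1 / (1 + Real.exp x ^ 2) * Real.exp x) = 1 / (g * Real.cosh x) := by
    have hc : Real.cosh x = (Real.exp x + Real.exp (-x)) / 2 := Real.cosh_eq x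
    rw [hc, Real.exp_neg]
    have he : Real.exp x ≠ 0 := (Real.exp_pos x).ne'
    have hd : (1:ℝ) + Real.exp x ^ 2 ≠ 0 := by positivity
    field_simp
    ring
  rw [heq] at h2
  exact h2

lemma hasDerivAt_h1 (g : ℝ) (hg : g ≠ 0) (x : ℝ) :
    HasDerivAt (h1 g) (h1d g x) x := by
  have ha := hasDerivAt_aa g hg x
  have hA := ((ha.const_mul 2).cos).const_mul (g - 1)
  have hB := ((ha.const_mul (2 * (g - 1))).cos)
  have := hA.add hB
  refine this.congr_deriv ?_
  unfold h1d
  ring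

lemma hasDerivAt_h2 (g : ℝ) (hg : g ≠ 0) (x : ℝ) :
    HasDerivAt (h2 g) (h2d g x) x := by
  have ha := hasDerivAt_aa g hg x
  have hA := ((ha.const_mul 2).sin).const_mul (-(g - 1))
  have hB := ((ha.const_mul (2 * (g - 1))).sin)
  have := hA.add hB
  refine this.congr_deriv ?_
  unfold h2d
  ring

lemma double_shift (θ : ℝ) :
    2 * Real.sin (θ - 3 * Real.pi / 4) * Real.cos (θ - 3 * Real.pi / 4) = Real.cos (2 * θ) := by
  have h : 2 * Real.sin (θ - 3 * Real.pi / 4) * Real.cos (θ - 3 * Real.pi / 4)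
      = Real.sin (2 * (θ - 3 * Real.pi / 4)) := by
    rw [Real.sin_two_mul]
  rw [h]
  have h2 : 2 * (θ - 3 * Real.pi / 4) = (2 * θ + Real.pi / 2) - 2 * Real.pi := by ring
  rw [h2, Real.sin_sub_two_pi, Real.sin_add_pi_div_two]

lemma deriv_data (r : ℝ → ℝ) (hr : ContDiff ℝ 2 r) :
    Differentiable ℝ r ∧ Differentiable ℝ (deriv r) ∧ Continuous (deriv (deriv r)) := by
  have h : ContDiff ℝ ((1:ℕ∞)+1) r := hr
  rw [contDiff_succ_iff_deriv] at h
  have h2 : ContDiff ℝ ((0:ℕ∞)+1) (deriv r) := h.2.2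
  rw [contDiff_succ_iff_deriv] at h2
  exact ⟨h.1, h2.1, h2.2.2.continuous⟩

lemma hasDerivAt_W (g : ℝ) (hg0 : g ≠ 0) (r : ℝ → ℝ) (hr : ContDiff ℝ 2 r)
    (hODE : IsGMSol g 1 r) (x : ℝ) : HasDerivAt (W g r) (Wd g r x) x := by
  obtain ⟨hr1, hdr, _⟩ := deriv_data r hr
  have hrd : HasDerivAt r (deriv r x) x := (hr1 x).hasDerivAt
  have hrdd : HasDerivAt (deriv r) (deriv (deriv r) x) x := (hdr x).hasDerivAt
  -- pieces
  have hT1 := (hrdd.pow 2).const_mul (1/2 : ℝ)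
  have hs1 := (hrd.sin).pow 2
  have hs2 := ((hrd.sub_const (3 * Real.pi / 4)).sin).pow 2
  have hT2 := (((hasDerivAt_h1 g hg0 x).mul hs1)).const_mul (1 / (2 * g))
  have hT3 := (((hasDerivAt_h2 g hg0 x).mul hs2)).const_mul (1 / (2 * g))
  have hD := (hT1.sub hT2).sub hT3
  have hWeq : W g r = fun y => 1/2 * (deriv r y) ^ 2
      - 1 / (2 * g) * (h1 g y * (Real.sin (r y)) ^ 2)
      - 1 / (2 * g) * (h2 g y * (Real.sin (r y - 3 * Real.pi / 4)) ^ 2) := by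
    funext y; unfold W; ring
  rw [hWeq]
  refine hD.congr_deriv ?_
  -- now the algebraic identity
  rw [hODE x]
  have key : (g - 1) * Real.sin (2 * r x - 2 * aa g x)
      + Real.sin (2 * r x + 2 * (g - 1) * aa g x)
      = h1 g x * (2 * Real.sin (r x) * Real.cos (r x))
        + h2 g x * (2 * Real.sin (r x - 3 * Real.pi / 4) * Real.cos (r x - 3 * Real.pi / 4)) := by
    rw [Real.sin_sub, Real.sin_add, double_shift (r x), ← Real.sin_two_mul]
    unfold h1 h2
    ring
  unfold Wd
  push_cast
  rw [key]
  simp only [Pi.pow_apply]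
  ring

lemma Wd_bound (g : ℝ) (hg2 : 2 ≤ g) (r : ℝ → ℝ) (x : ℝ) :
    |Wd g r x| ≤ 4 * (g - 1) / (g ^ 2 * Real.cosh x) := by
  have hg0 : (0:ℝ) < g := by linarith
  have hc : 0 < Real.cosh x := Real.cosh_pos x
  have hd0 : (0:ℝ) < 1 / (g * Real.cosh x) := by positivity
  have habs2 : ∀ u v : ℝ, |Real.sin u + Real.sin v| ≤ 2 := by
    intro u v
    calc |Real.sin u + Real.sin v| ≤ |Real.sin u| + |Real.sin v| := abs_add_le _ _
      _ ≤ 1 + 1 := add_le_add (Real.abs_sin_le_one _) (Real.abs_sin_le_one _)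
      _ = 2 := by norm_num
  have habs2' : ∀ u v : ℝ, |Real.cos u - Real.cos v| ≤ 2 := by
    intro u v
    calc |Real.cos u - Real.cos v| ≤ |Real.cos u| + |Real.cos v| := abs_sub _ _
      _ ≤ 1 + 1 := add_le_add (Real.abs_cos_le_one _) (Real.abs_cos_le_one _)
      _ = 2 := by norm_num
  have b1 : |h1d g x| ≤ 4 * (g - 1) * (1 / (g * Real.cosh x)) := by
    unfold h1d
    rw [abs_mul, abs_mul, abs_neg, abs_of_nonneg (by linarith : (0:ℝ) ≤ 2 * (g - 1)),
      abs_of_pos hd0]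
    calc 2 * (g - 1) * (1 / (g * Real.cosh x)) * |_| ≤
        2 * (g - 1) * (1 / (g * Real.cosh x)) * 2 := by
          apply mul_le_mul_of_nonneg_left (habs2 _ _)
            (mul_nonneg (by linarith : (0:ℝ) ≤ 2 * (g - 1)) hd0.le)
      _ = 4 * (g - 1) * (1 / (g * Real.cosh x)) := by ring
  have b2 : |h2d g x| ≤ 4 * (g - 1) * (1 / (g * Real.cosh x)) := by
    unfold h2d
    rw [abs_mul, abs_mul, abs_of_nonneg (by linarith : (0:ℝ) ≤ 2 * (g - 1)),
      abs_of_pos hd0]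
    calc 2 * (g - 1) * (1 / (g * Real.cosh x)) * |_| ≤
        2 * (g - 1) * (1 / (g * Real.cosh x)) * 2 := by
          apply mul_le_mul_of_nonneg_left (habs2' _ _)
            (mul_nonneg (by linarith : (0:ℝ) ≤ 2 * (g - 1)) hd0.le)
      _ = 4 * (g - 1) * (1 / (g * Real.cosh x)) := by ring
  have e1 : |h1d g x * (Real.sin (r x)) ^ 2| ≤ 4 * (g - 1) * (1 / (g * Real.cosh x)) := by
    rw [abs_mul, abs_of_nonneg (sq_nonneg (Real.sin (r x)))]
    calc |h1d g x| * (Real.sin (r x)) ^ 2 ≤ (4 * (g - 1) * (1 / (g * Real.cosh x))) * 1 :=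
        mul_le_mul b1 (Real.sin_sq_le_one _) (sq_nonneg _)
          (mul_nonneg (by linarith : (0:ℝ) ≤ 4 * (g - 1)) hd0.le)
      _ = _ := by ring
  have e2 : |h2d g x * (Real.sin (r x - 3 * Real.pi / 4)) ^ 2|
      ≤ 4 * (g - 1) * (1 / (g * Real.cosh x)) := by
    rw [abs_mul, abs_of_nonneg (sq_nonneg (Real.sin (r x - 3 * Real.pi / 4)))]
    calc |h2d g x| * (Real.sin (r x - 3 * Real.pi / 4)) ^ 2
        ≤ (4 * (g - 1) * (1 / (g * Real.cosh x))) * 1 :=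
        mul_le_mul b2 (Real.sin_sq_le_one _) (sq_nonneg _)
          (mul_nonneg (by linarith : (0:ℝ) ≤ 4 * (g - 1)) hd0.le)
      _ = _ := by ring
  have : |Wd g r x| ≤ 1 / (2 * g) * (4 * (g - 1) * (1 / (g * Real.cosh x))
      + 4 * (g - 1) * (1 / (g * Real.cosh x))) := by
    unfold Wd
    rw [abs_mul, abs_neg, abs_of_pos (by apply one_div_pos.mpr; linarith : (0:ℝ) < 1 / (2 * g))]
    apply mul_le_mul_of_nonneg_left _ (by apply le_of_lt; apply one_div_pos.mpr; linarith)
    calc |h1d g x * (Real.sin (r x)) ^ 2 + h2d g x * (Real.sin (r x - 3 * Real.pi / 4)) ^ 2|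
        ≤ |h1d g x * (Real.sin (r x)) ^ 2| + |h2d g x * (Real.sin (r x - 3 * Real.pi / 4)) ^ 2| :=
          abs_add_le _ _
      _ ≤ _ := add_le_add e1 e2
  calc |Wd g r x| ≤ 1 / (2 * g) * (4 * (g - 1) * (1 / (g * Real.cosh x))
      + 4 * (g - 1) * (1 / (g * Real.cosh x))) := this
    _ = 4 * (g - 1) / (g ^ 2 * Real.cosh x) := by
        field_simp
        ring

lemma cont_Wd (g : ℝ) (hg0 : 0 < g) (r : ℝ → ℝ) (hrc : Continuous r) :
    Continuous (Wd g r) := by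
  have hne : ∀ x : ℝ, g * Real.cosh x ≠ 0 := fun x => by
    have := Real.cosh_pos x; positivity
  have hc_inv : Continuous (fun x => 1 / (g * Real.cosh x)) :=
    continuous_const.div (continuous_const.mul Real.continuous_cosh) hne
  have hc_aa : Continuous (aa g) := by unfold aa; continuity
  have hA : Continuous fun x => Real.sin (2 * aa g x) :=
    Real.continuous_sin.comp (continuous_const.mul hc_aa)
  have hB : Continuous fun x => Real.sin (2 * (g - 1) * aa g x) :=
    Real.continuous_sin.comp (continuous_const.mul hc_aa)
  have hA' : Continuous fun x => Real.cos (2 * aa g x) :=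
    Real.continuous_cos.comp (continuous_const.mul hc_aa)
  have hB' : Continuous fun x => Real.cos (2 * (g - 1) * aa g x) :=
    Real.continuous_cos.comp (continuous_const.mul hc_aa)
  have h1c : Continuous (h1d g) := (continuous_const.mul hc_inv).mul (hA.add hB)
  have h2c : Continuous (h2d g) := (continuous_const.mul hc_inv).mul (hB'.sub hA')
  have hs1 : Continuous fun x => (Real.sin (r x)) ^ 2 :=
    (Real.continuous_sin.comp hrc).pow 2
  have hs2 : Continuous fun x => (Real.sin (r x - 3 * Real.pi / 4)) ^ 2 :=
    (Real.continuous_sin.comp (hrc.sub continuous_const)).pow 2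
  exact continuous_const.mul ((h1c.mul hs1).add (h2c.mul hs2))

theorem stmt16 (g : ℝ) (hg : g ∈ ({2, 3, 4, 6} : Set ℝ)) (r : ℝ → ℝ)
    (hr : ContDiff ℝ 2 r) (hODE : IsGMSol g 1 r) :
    (∀ x : ℝ, |deriv (W g r) x| ≤ 4 * (g - 1) / (g ^ 2 * Real.cosh x)) ∧
    (∀ w : ℝ, Filter.Tendsto (W g r) Filter.atBot (nhds w) →
      |W g r 0 - w| ≤ 2 * Real.pi * (g - 1) / g ^ 2) := by
  have hg2 : (2:ℝ) ≤ g := by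
    simp only [Set.mem_insert_iff, Set.mem_singleton_iff] at hg
    rcases hg with rfl | rfl | rfl | rfl <;> norm_num
  have hg0 : (0:ℝ) < g := by linarith
  have hg0' : g ≠ 0 := hg0.ne'
  have hderiv : ∀ x, deriv (W g r) x = Wd g r x :=
    fun x => (hasDerivAt_W g hg0' r hr hODE x).deriv
  constructor
  · intro x; rw [hderiv x]; exact Wd_bound g hg2 r x
  · intro w hw
    have hrc : Continuous r := hr.continuous
    have hWdc := cont_Wd g hg0 r hrc
    have key : ∀ x : ℝ, x ≤ 0 → |W g r 0 - W g r x| ≤ 2 * Real.pi * (g - 1) / g ^ 2 := by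
      intro x hx
      have heq : ∫ t in x..0, Wd g r t = W g r 0 - W g r x :=
        intervalIntegral.integral_eq_sub_of_hasDerivAt
          (fun t _ => hasDerivAt_W g hg0' r hr hODE t) (hWdc.intervalIntegrable x 0)
      rw [← heq]
      have hboundc : Continuous fun t => 4 * (g - 1) / (g ^ 2 * Real.cosh t) := by
        apply continuous_const.div (continuous_const.mul Real.continuous_cosh)
        intro t; have := Real.cosh_pos t; exact mul_ne_zero (pow_ne_zero 2 hg0') this.ne'
      have h1 : |∫ t in x..0, Wd g r t| ≤ ∫ t in x..0, |Wd g r t| := by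
        simpa [Real.norm_eq_abs] using
          intervalIntegral.norm_integral_le_integral_norm (f := Wd g r) (a := x) (b := 0) hx
      have h2 : ∫ t in x..0, |Wd g r t| ≤ ∫ t in x..0, 4 * (g - 1) / (g ^ 2 * Real.cosh t) :=
        intervalIntegral.integral_mono_on hx (hWdc.abs.intervalIntegrable x 0)
          (hboundc.intervalIntegrable x 0) (fun t _ => Wd_bound g hg2 r t)
      have h3 : ∫ t in x..0, 4 * (g - 1) / (g ^ 2 * Real.cosh t)
          = (4 * (g - 1) / g ^ 2) * aa 1 0 - (4 * (g - 1) / g ^ 2) * aa 1 x := by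
        apply intervalIntegral.integral_eq_sub_of_hasDerivAt
          (f := fun y => 4 * (g - 1) / g ^ 2 * aa 1 y)
        · intro t _
          have h := (hasDerivAt_aa 1 one_ne_zero t).const_mul (4 * (g - 1) / g ^ 2)
          refine h.congr_deriv ?_
          have hc := (Real.cosh_pos t).ne'
          field_simp
        · exact hboundc.intervalIntegrable x 0
      have haa0 : aa 1 0 = Real.pi / 2 := by
        unfold aa; rw [Real.exp_zero, Real.arctan_one]; ring
      have haax : 0 ≤ aa 1 x := by
        unfold aa
        have h : 0 < Real.arctan (Real.exp x) := by
          have h' := Real.arctan_strictMono (Real.exp_pos x)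
          rwa [Real.arctan_zero] at h'
        positivity
      have hgg : 0 ≤ 4 * (g - 1) / g ^ 2 := div_nonneg (by linarith) (by positivity)
      calc |∫ t in x..0, Wd g r t| ≤ ∫ t in x..0, |Wd g r t| := h1
        _ ≤ ∫ t in x..0, 4 * (g - 1) / (g ^ 2 * Real.cosh t) := h2
        _ = (4 * (g - 1) / g ^ 2) * aa 1 0 - (4 * (g - 1) / g ^ 2) * aa 1 x := h3
        _ ≤ (4 * (g - 1) / g ^ 2) * (Real.pi / 2) := by rw [haa0]; nlinarith
        _ = 2 * Real.pi * (g - 1) / g ^ 2 := by ring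
    have htend : Tendsto (fun x => |W g r 0 - W g r x|) atBot (nhds |W g r 0 - w|) :=
      (tendsto_const_nhds.sub hw).abs
    exact le_of_tendsto htend ((eventually_le_atBot 0).mono key)
end

section
/- For g ∈ {2,3,4,6}, m = 1: the functions r(x) = a(x) and r(x) = −(g−1)·a(x) + π, where a(x) = (2/g)·arctan(e^x), are solutions of the (g,1)-ODE r''(x) = (1/(2g))·[(g−1)·sin(2r(x)−2a(x)) + sin(2r(x)+2(g−1)·a(x))], and for both of these solutions the associated function W satisfies lim_{x→−∞} W(x) = 0. -/
open Real Filter Topology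

lemma aa_hasDerivAt (g x : ℝ) :
    HasDerivAt (aa g) (2 / g * (Real.exp x / (1 + Real.exp x ^ 2))) x := by
  have h := ((Real.hasDerivAt_arctan (Real.exp x)).comp x
    (Real.hasDerivAt_exp x)).const_mul (2 / g)
  have he : 2 / g * (1 / (1 + Real.exp x ^ 2) * Real.exp x)
      = 2 / g * (Real.exp x / (1 + Real.exp x ^ 2)) := by ring
  rw [he] at h
  exact h

lemma aa_deriv_eq (g : ℝ) :
    deriv (aa g) = fun x => 2 / g * (Real.exp x / (1 + Real.exp x ^ 2)) :=
  funext fun x => (aa_hasDerivAt g x).deriv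

lemma q_hasDerivAt (x : ℝ) :
    HasDerivAt (fun x => Real.exp x / (1 + Real.exp x ^ 2))
      ((Real.exp x * (1 + Real.exp x ^ 2) - Real.exp x * (2 * Real.exp x * Real.exp x))
        / (1 + Real.exp x ^ 2) ^ 2) x := by
  have hd : HasDerivAt (fun x : ℝ => 1 + Real.exp x ^ 2) (2 * Real.exp x * Real.exp x) x := by
    have h := ((Real.hasDerivAt_exp x).pow 2).const_add 1
    simpa using h
  exact (Real.hasDerivAt_exp x).div hd (by positivity)

lemma sin_four_arctan (u : ℝ) :
    Real.sin (4 * Real.arctan u) = 4 * u * (1 - u ^ 2) / (1 + u ^ 2) ^ 2 := by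
  have h1 : (1:ℝ) + u ^ 2 ≠ 0 := by positivity
  have hq : Real.sqrt (1 + u ^ 2) ^ 2 = 1 + u ^ 2 := Real.sq_sqrt (by positivity)
  have hq0 : Real.sqrt (1 + u ^ 2) ≠ 0 := by positivity
  have hs2 : Real.sin (2 * Real.arctan u) = 2 * u / (1 + u ^ 2) := by
    rw [Real.sin_two_mul, Real.sin_arctan, Real.cos_arctan]
    field_simp
    rw [hq]
  have hc2 : Real.cos (2 * Real.arctan u) = (1 - u ^ 2) / (1 + u ^ 2) := by
    rw [Real.cos_two_mul, Real.cos_arctan]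
    field_simp
    rw [hq]
    ring
  have h4 : (4:ℝ) * Real.arctan u = 2 * (2 * Real.arctan u) := by ring
  rw [h4, Real.sin_two_mul, hs2, hc2]
  field_simp
  ring

theorem stmt18 (g : ℝ) (hg : g ∈ ({2, 3, 4, 6} : Set ℝ)) :
    IsGMSol g 1 (aa g) ∧
    IsGMSol g 1 (fun x => -(g - 1) * aa g x + Real.pi) ∧
    Filter.Tendsto (W g (aa g)) Filter.atBot (nhds 0) ∧
    Filter.Tendsto (W g (fun x => -(g - 1) * aa g x + Real.pi)) Filter.atBot (nhds 0) := by
  have hgne : g ≠ 0 := by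
    simp only [Set.mem_insert_iff, Set.mem_singleton_iff] at hg
    rcases hg with rfl | rfl | rfl | rfl <;> norm_num
  -- derivative facts for the second solution
  have hr2deriv : deriv (fun x => -(g - 1) * aa g x + Real.pi)
      = fun x => -(g - 1) * (2 / g * (Real.exp x / (1 + Real.exp x ^ 2))) :=
    funext fun x => (((aa_hasDerivAt g x).const_mul (-(g - 1))).add_const Real.pi).deriv
  have hr2d : ∀ x, deriv (fun x => -(g - 1) * aa g x + Real.pi) x
      = -(g - 1) * deriv (aa g) x := by
    intro x
    rw [hr2deriv, aa_deriv_eq]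
  -- ODE for aa
  have hode1 : IsGMSol g 1 (aa g) := by
    intro x
    have hE : (1:ℝ) + Real.exp x ^ 2 ≠ 0 := by positivity
    have harg : 2 * aa g x + 2 * (g - 1) * aa g x = 4 * Real.arctan (Real.exp x) := by
      unfold aa; field_simp; ring
    have harg0 : 2 * aa g x - 2 * aa g x = 0 := by ring
    rw [aa_deriv_eq, ((q_hasDerivAt x).const_mul (2 / g)).deriv, harg, harg0,
      Real.sin_zero, sin_four_arctan]
    field_simp
    ring
  -- ODE for the second solution
  have hode2 : IsGMSol g 1 (fun x => -(g - 1) * aa g x + Real.pi) := by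
    intro x
    have hE : (1:ℝ) + Real.exp x ^ 2 ≠ 0 := by positivity
    have hA : 2 * (-(g - 1) * aa g x + Real.pi) - 2 * aa g x
        = -(4 * Real.arctan (Real.exp x)) + 2 * Real.pi := by
      unfold aa; field_simp; ring
    have hB : 2 * (-(g - 1) * aa g x + Real.pi) + 2 * (g - 1) * aa g x = 2 * Real.pi := by
      ring
    rw [hr2deriv, (((q_hasDerivAt x).const_mul (2 / g)).const_mul (-(g - 1))).deriv]
    simp only []
    rw [hA, hB, Real.sin_add_two_pi, Real.sin_neg, Real.sin_two_pi, sin_four_arctan]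
    field_simp
    ring
  -- limits
  have ha0 : Tendsto (aa g) atBot (𝓝 0) := by
    have h : Tendsto (fun x => Real.arctan (Real.exp x)) atBot (𝓝 (Real.arctan 0)) :=
      (Real.continuous_arctan.tendsto 0).comp Real.tendsto_exp_atBot
    have h2 := h.const_mul (2 / g)
    exact (by simpa using h2 : Tendsto (fun x => 2 / g * Real.arctan (Real.exp x)) atBot (𝓝 0))
  have hd0 : Tendsto (deriv (aa g)) atBot (𝓝 0) := by
    rw [aa_deriv_eq]
    have hc : Continuous (fun u : ℝ => 2 / g * (u / (1 + u ^ 2))) := by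
      apply continuous_const.mul
      exact continuous_id.div (by continuity) (fun u => by positivity)
    have h := (hc.tendsto 0).comp Real.tendsto_exp_atBot
    simpa [Function.comp_def] using h
  have hpair : Tendsto (fun x => (aa g x, deriv (aa g) x)) atBot (𝓝 ((0:ℝ), (0:ℝ))) :=
    ha0.prodMk_nhds hd0
  constructor
  · exact hode1
  constructor
  · exact hode2
  constructor
  · -- W for aa
    have hΦ : Continuous (fun p : ℝ × ℝ =>
        (1 / 2) * p.2 ^ 2
          - (1 / (2 * g)) * ((g - 1) * Real.cos (2 * p.1) + Real.cos (2 * (g - 1) * p.1))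
              * (Real.sin p.1) ^ 2
          - (1 / (2 * g)) * (-(g - 1) * Real.sin (2 * p.1) + Real.sin (2 * (g - 1) * p.1))
              * (Real.sin (p.1 - 3 * Real.pi / 4)) ^ 2) := by fun_prop
    have h := (hΦ.tendsto ((0:ℝ), (0:ℝ))).comp hpair
    have hW : W g (aa g) = (fun p : ℝ × ℝ =>
        (1 / 2) * p.2 ^ 2
          - (1 / (2 * g)) * ((g - 1) * Real.cos (2 * p.1) + Real.cos (2 * (g - 1) * p.1))
              * (Real.sin p.1) ^ 2
          - (1 / (2 * g)) * (-(g - 1) * Real.sin (2 * p.1) + Real.sin (2 * (g - 1) * p.1))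
              * (Real.sin (p.1 - 3 * Real.pi / 4)) ^ 2)
        ∘ (fun x => (aa g x, deriv (aa g) x)) := by
      funext x
      simp only [W, h1, h2, Function.comp]
    rw [hW]
    simpa using h
  · -- W for the second solution
    have hΨ : Continuous (fun p : ℝ × ℝ =>
        (1 / 2) * (-(g - 1) * p.2) ^ 2
          - (1 / (2 * g)) * ((g - 1) * Real.cos (2 * p.1) + Real.cos (2 * (g - 1) * p.1))
              * (Real.sin (-(g - 1) * p.1 + Real.pi)) ^ 2
          - (1 / (2 * g)) * (-(g - 1) * Real.sin (2 * p.1) + Real.sin (2 * (g - 1) * p.1))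
              * (Real.sin (-(g - 1) * p.1 + Real.pi - 3 * Real.pi / 4)) ^ 2) := by fun_prop
    have h := (hΨ.tendsto ((0:ℝ), (0:ℝ))).comp hpair
    have hW : W g (fun x => -(g - 1) * aa g x + Real.pi) = (fun p : ℝ × ℝ =>
        (1 / 2) * (-(g - 1) * p.2) ^ 2
          - (1 / (2 * g)) * ((g - 1) * Real.cos (2 * p.1) + Real.cos (2 * (g - 1) * p.1))
              * (Real.sin (-(g - 1) * p.1 + Real.pi)) ^ 2
          - (1 / (2 * g)) * (-(g - 1) * Real.sin (2 * p.1) + Real.sin (2 * (g - 1) * p.1))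
              * (Real.sin (-(g - 1) * p.1 + Real.pi - 3 * Real.pi / 4)) ^ 2)
        ∘ (fun x => (aa g x, deriv (aa g) x)) := by
      funext x
      simp only [W, h1, h2, Function.comp]
      rw [hr2d x]
    rw [hW]
    simpa [Real.sin_pi] using h
end
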